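/- arXiv:1208.3453 — 2 statements merged into one kernel-verified Lean document; each statement's English description precedes it below -/
import Mathlib

section
/- Let N be a positive integer, e a positive divisor of N, and δ = [[a,b],[c,d]] ∈ Γ₀(N) with a ≡ d (mod gcd(e, N/e)). Set h = N / gcd(e², N). Then there exists a bijection σ : ℤ/hℤ → ℤ/hℤ such that for all integers n and n' with n' ≡ σ(n mod h) (mod h), the matrix U_e · T^n · δ · T^{−n'} · U_e^{−1} belongs to Γ₀(N). -/
/-!
The lower-left entry of `U_e T^n δ T^{-n'} U_e⁻¹` is
`c (1 + e n) (1 + e n') + e (a - d) + e² (a n' - b - d n)`, and `N ∣ c`. Write `g = gcd(e², N)`,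
so `N = g h` and `e² = g q` with `q` coprime to `h`. Since `g = e · gcd(e, N/e)`, the hypothesis
`a ≡ d` makes `e (d - a) = g w`, so membership in `Γ₀(N)` reduces to the linear congruence
`q a n' ≡ q d n + w + q b (mod h)`. Both `q a` and `q d` are units mod `h` (`a` and `d` are
prime to `N` because `ad ≡ 1 (mod N)`), so this congruence is solved by an affine bijection
of `ℤ/hℤ`.
-/

open Matrix CongruenceSubgroup
open scoped MatrixGroups

/-- The matrix `U_e = [[1,0],[e,1]]` in `SL(2, ℤ)`. -/
def Ue (e : ℤ) : SL(2, ℤ) :=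
  ⟨!![1, 0; e, 1], by norm_num [Matrix.det_fin_two_of]⟩

open ModularGroup

lemma Units.exists_bijective_mul_eq_mul_add {R : Type*} [Ring R] (u v : Rˣ) (β : R) :
    ∃ σ : R → R, Function.Bijective σ ∧ ∀ z, u * σ z = v * z + β :=
  ⟨((Units.mulLeft v).trans (Equiv.addRight β)).trans (Units.mulLeft u⁻¹), Equiv.bijective _,
    fun z => by simp⟩

lemma Nat.gcd_sq_of_dvd {e N : ℕ} (heN : e ∣ N) :
    Nat.gcd (e ^ 2) N = e * Nat.gcd e (N / e) := by
  conv_lhs => rw [sq, ← Nat.mul_div_cancel' heN]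
  exact Nat.gcd_mul_left e e (N / e)

lemma Ue_inv (e : ℤ) : (Ue e)⁻¹ = Ue (-e) :=
  inv_eq_of_mul_eq_one_right <| Subtype.ext <| by
    rw [Matrix.SpecialLinearGroup.coe_mul]
    simp [Ue, Matrix.one_fin_two]

lemma Ue_mul_T_zpow_mul_mul_T_zpow_mul_Ue_inv_one_zero (e n n' : ℤ) (δ : SL(2, ℤ)) :
    (Ue e * T ^ n * δ * T ^ (-n') * (Ue e)⁻¹) 1 0 =
      δ 1 0 * (1 + e * n) * (1 + e * n') +
        (e * (δ 0 0 - δ 1 1) + e ^ 2 * (δ 0 0 * n' - δ 0 1 - δ 1 1 * n)) := by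
  rw [Ue_inv]
  simp only [Matrix.SpecialLinearGroup.coe_mul, coe_T_zpow]
  rw [Matrix.eta_fin_two (δ : Matrix (Fin 2) (Fin 2) ℤ)]
  simp only [Ue, Matrix.SpecialLinearGroup.coe_mk, Matrix.mul_fin_two, Matrix.of_apply,
    Matrix.cons_val', Matrix.cons_val_zero, Matrix.cons_val_one, Matrix.cons_val_fin_one]
  ring

lemma Ue_mul_T_zpow_mul_mul_T_zpow_mul_Ue_inv_mem_Gamma0_iff {N : ℕ} {δ : SL(2, ℤ)}
    (hδ : δ ∈ Gamma0 N) (e n n' : ℤ) :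
    Ue e * T ^ n * δ * T ^ (-n') * (Ue e)⁻¹ ∈ Gamma0 N ↔
      (N : ℤ) ∣ e * (δ 0 0 - δ 1 1) + e ^ 2 * (δ 0 0 * n' - δ 0 1 - δ 1 1 * n) := by
  have hc : (N : ℤ) ∣ δ 1 0 := (ZMod.intCast_zmod_eq_zero_iff_dvd _ _).mp (Gamma0_mem.mp hδ)
  rw [Gamma0_mem, Ue_mul_T_zpow_mul_mul_T_zpow_mul_Ue_inv_one_zero,
    ZMod.intCast_zmod_eq_zero_iff_dvd]
  exact dvd_add_right (dvd_mul_of_dvd_left (dvd_mul_of_dvd_left hc _) _)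

lemma isCoprime_of_mem_Gamma0 {N : ℕ} {δ : SL(2, ℤ)} (hδ : δ ∈ Gamma0 N) :
    IsCoprime (δ 0 0) N ∧ IsCoprime (δ 1 1) N := by
  obtain ⟨k, hk⟩ := (ZMod.intCast_zmod_eq_zero_iff_dvd _ _).mp (Gamma0_mem.mp hδ)
  have hdet : δ 0 0 * δ 1 1 - δ 0 1 * δ 1 0 = 1 := by
    rw [← Matrix.det_fin_two]
    exact δ.det_coe
  exact ⟨⟨δ 1 1, -(δ 0 1 * k), by linear_combination hdet + δ 0 1 * hk⟩,
    ⟨δ 0 0, -(δ 0 1 * k), by linear_combination hdet + δ 0 1 * hk⟩⟩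

theorem stmt_7_general (N : ℕ) (hN : 0 < N) (e : ℕ) (heN : e ∣ N)
    (δ : SL(2, ℤ)) (hδ : δ ∈ Gamma0 N)
    (had : ((δ : Matrix (Fin 2) (Fin 2) ℤ) 0 0)
      ≡ ((δ : Matrix (Fin 2) (Fin 2) ℤ) 1 1) [ZMOD (Nat.gcd e (N / e))]) :
    ∃ σ : ZMod (N / Nat.gcd (e ^ 2) N) → ZMod (N / Nat.gcd (e ^ 2) N),
      Function.Bijective σ ∧
      ∀ n n' : ℤ, (n' : ZMod (N / Nat.gcd (e ^ 2) N)) = σ (n : ZMod (N / Nat.gcd (e ^ 2) N)) →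
        Ue (e : ℤ) * ModularGroup.T ^ n * δ * ModularGroup.T ^ (-n') * (Ue (e : ℤ))⁻¹
          ∈ Gamma0 N := by
  set g := Nat.gcd (e ^ 2) N
  set h := N / g
  set q := e ^ 2 / g
  have hgh : (g : ℤ) * h = N := by exact_mod_cast Nat.mul_div_cancel' (Nat.gcd_dvd_right _ _)
  have hgq : (g : ℤ) * q = (e : ℤ) ^ 2 := by
    exact_mod_cast Nat.mul_div_cancel' (Nat.gcd_dvd_left _ _)
  have hqh : IsCoprime (q : ℤ) h :=
    Nat.isCoprime_iff_coprime.mpr (Nat.coprime_div_gcd_div_gcd (Nat.gcd_pos_of_pos_right _ hN))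
  obtain ⟨w, hw⟩ : (g : ℤ) ∣ e * (δ 1 1 - δ 0 0) := by
    rw [show g = e * Nat.gcd e (N / e) from Nat.gcd_sq_of_dvd heN, Nat.cast_mul]
    exact mul_dvd_mul_left _ had.dvd
  have hhN : (h : ℤ) ∣ N := ⟨g, by rw [← hgh, mul_comm]⟩
  obtain ⟨haN, hdN⟩ := isCoprime_of_mem_Gamma0 hδ
  obtain ⟨σ, hσ, hσ_eq⟩ := Units.exists_bijective_mul_eq_mul_add
    (ZMod.unitOfIsCoprime (q * δ 0 0) (hqh.mul_left (haN.of_isCoprime_of_dvd_right hhN)))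
    (ZMod.unitOfIsCoprime (q * δ 1 1) (hqh.mul_left (hdN.of_isCoprime_of_dvd_right hhN)))
    ((w + q * δ 0 1 : ℤ) : ZMod h)
  refine ⟨σ, hσ, fun n n' hn => ?_⟩
  have hcong : ((q * δ 1 1 * n + (w + q * δ 0 1) : ℤ) : ZMod h) =
      ((q * δ 0 0 * n' : ℤ) : ZMod h) := by
    have := hσ_eq n
    rw [← hn, ZMod.coe_unitOfIsCoprime, ZMod.coe_unitOfIsCoprime] at this
    push_cast at this ⊢
    exact this.symm
  rw [Ue_mul_T_zpow_mul_mul_T_zpow_mul_Ue_inv_mem_Gamma0_iff hδ, ← hgh]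
  have hentry : (e : ℤ) * (δ 0 0 - δ 1 1) + e ^ 2 * (δ 0 0 * n' - δ 0 1 - δ 1 1 * n) =
      g * (q * δ 0 0 * n' - (q * δ 1 1 * n + (w + q * δ 0 1))) := by
    linear_combination -hw - (δ 0 0 * n' - δ 0 1 - δ 1 1 * n) * hgq
  rw [hentry]
  exact mul_dvd_mul_left _ ((ZMod.intCast_eq_intCast_iff_dvd_sub _ _ _).mp hcong)

/-- Let `N` be a positive integer, `e` a positive divisor of `N`, and `δ = [[a,b],[c,d]] ∈ Γ₀(N)`
with `a ≡ d (mod gcd(e, N/e))`.  Set `h = N / gcd(e², N)`.  Then there is a bijection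
`σ : ℤ/hℤ → ℤ/hℤ` such that for all integers `n, n'` with `n' ≡ σ(n mod h) (mod h)` the matrix
`U_e T^n δ T^{-n'} U_e⁻¹` belongs to `Γ₀(N)`. -/
theorem stmt_7 (N : ℕ) (hN : 0 < N) (e : ℕ) (he : 0 < e) (heN : e ∣ N)
    (δ : SL(2, ℤ)) (hδ : δ ∈ Gamma0 N)
    (had : ((δ : Matrix (Fin 2) (Fin 2) ℤ) 0 0)
      ≡ ((δ : Matrix (Fin 2) (Fin 2) ℤ) 1 1) [ZMOD (Nat.gcd e (N / e))]) :
    ∃ σ : ZMod (N / Nat.gcd (e ^ 2) N) → ZMod (N / Nat.gcd (e ^ 2) N),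
      Function.Bijective σ ∧
      ∀ n n' : ℤ, (n' : ZMod (N / Nat.gcd (e ^ 2) N)) = σ (n : ZMod (N / Nat.gcd (e ^ 2) N)) →
        Ue (e : ℤ) * ModularGroup.T ^ n * δ * ModularGroup.T ^ (-n') * (Ue (e : ℤ))⁻¹
          ∈ Gamma0 N :=
  stmt_7_general N hN e heN δ hδ had
end

section
/- Let N be a positive integer, e an integer, and n an integer. Then the matrix U_e · T^n · U_e^{−1} belongs to Γ₀(N) if and only if N / gcd(e², N) divides n. In particular, the width of the cusp 1/e of Γ₀(N) is N / gcd(e², N). -/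
/-!
Conjugating `T^n` by `U_e` gives `[[1 - e n, n], [-e² n, 1 + e n]]`, so the conjugate lies in
`Γ₀(N)` exactly when `N ∣ e² n`. Dividing out `g = gcd(e², N)` leaves `N/g ∣ (e²/g) n` with
`N/g` and `e²/g` coprime, i.e. `N/g ∣ n`.
-/

open Matrix CongruenceSubgroup
open scoped MatrixGroups

theorem div_gcd_dvd_iff_dvd_mul {R : Type*} [EuclideanDomain R] [GCDMonoid R] {a b c : R}
    (h : gcd a b ≠ 0) : b / gcd a b ∣ c ↔ b ∣ a * c := by
  have hcop := isCoprime_div_gcd_div_gcd_of_gcd_ne_zero h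
  obtain ⟨a', ha⟩ := gcd_dvd_left a b
  obtain ⟨b', hb⟩ := gcd_dvd_right a b
  generalize gcd a b = g at *
  subst ha hb
  simp only [mul_div_cancel_left₀ _ h] at hcop ⊢
  rw [mul_assoc, mul_dvd_mul_iff_left h]
  exact ⟨fun hc => dvd_mul_of_dvd_right hc _, hcop.symm.dvd_of_dvd_mul_left⟩

theorem coe_Ue (e : ℤ) : ((Ue e : SL(2, ℤ)) : Matrix (Fin 2) (Fin 2) ℤ) = !![1, 0; e, 1] := rfl

theorem coe_Ue_inv (e : ℤ) :
    (((Ue e)⁻¹ : SL(2, ℤ)) : Matrix (Fin 2) (Fin 2) ℤ) = !![1, 0; -e, 1] := by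
  rw [Matrix.SpecialLinearGroup.coe_inv, coe_Ue, adjugate_fin_two_of, neg_zero]

theorem coe_Ue_mul_T_zpow_mul_Ue_inv (e n : ℤ) :
    ((Ue e * ModularGroup.T ^ n * (Ue e)⁻¹ : SL(2, ℤ)) : Matrix (Fin 2) (Fin 2) ℤ) =
      !![1 - e * n, n; -(e ^ 2 * n), 1 + e * n] := by
  rw [Matrix.SpecialLinearGroup.coe_mul, Matrix.SpecialLinearGroup.coe_mul,
    ModularGroup.coe_T_zpow, coe_Ue, coe_Ue_inv]
  ext i j
  fin_cases i <;> fin_cases j <;> simp <;> ring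

theorem Ue_mul_T_zpow_mul_Ue_inv_mem_Gamma0_iff (N : ℕ) (e n : ℤ) :
    Ue e * ModularGroup.T ^ n * (Ue e)⁻¹ ∈ Gamma0 N ↔ (N : ℤ) ∣ e ^ 2 * n := by
  rw [Gamma0_mem, coe_Ue_mul_T_zpow_mul_Ue_inv, of_apply, cons_val_one, cons_val_zero,
    cons_val_zero, Int.cast_neg, neg_eq_zero, ZMod.intCast_zmod_eq_zero_iff_dvd]

/-- Let `N` be a positive integer and `e`, `n` integers.  Then `U_e T^n U_e⁻¹ ∈ Γ₀(N)` if and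
only if `N / gcd(e², N)` divides `n`; i.e. the width of the cusp `1/e` of `Γ₀(N)` is
`N / gcd(e², N)`. -/
theorem stmt_10 (N : ℕ) (hN : 0 < N) (e n : ℤ) :
    Ue e * ModularGroup.T ^ n * (Ue e)⁻¹ ∈ Gamma0 N ↔
      ((N / Int.gcd (e ^ 2) (N : ℤ) : ℕ) : ℤ) ∣ n := by
  have hgcd : gcd (e ^ 2) (N : ℤ) ≠ 0 := gcd_ne_zero_of_right (by exact_mod_cast hN.ne')
  rw [Ue_mul_T_zpow_mul_Ue_inv_mem_Gamma0_iff, Int.natCast_div, Int.coe_gcd,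
    div_gcd_dvd_iff_dvd_mul hgcd]
end
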